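/- arXiv:1105.3651 — 6 statements merged into one kernel-verified Lean document; each statement's English description precedes it below -/
import Mathlib

section
/- Let g be a compact Lie algebra with Ad-invariant inner product, g = h ⊕ v with v = h^⊥, and A : v → v a positive definite symmetric Ad_H-equivariant operator satisfying [x, Ax] ∈ v for all x ∈ v. Fix x ∈ v. The following are equivalent: (i) there exists a ∈ h with [a + Ax, x]_v = 0 (the v-component vanishes); (ii) there exists a ∈ h with [a + Ax, x] = 0 in g; (iii) Ax lies in the projection pr_v(g_x) of the centralizer g_x = {ξ ∈ g : [ξ, x] = 0} onto v. -/
/-- Setting of a compact Lie algebra `g` with `Ad`-invariant inner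
product `B`, subalgebra `h`, `v = h^⊥`, and a positive definite symmetric
`Ad_H`-equivariant operator `A : v → v` satisfying `⁅x, A x⁆ ∈ v` for all `x ∈ v`.
Fix `x ∈ v`.  The following are equivalent:
(i)  `∃ a ∈ h` with `⁅a + A x, x⁆_v = 0` (the `v`-component vanishes, i.e. the
     bracket lies in `h`);
(ii) `∃ a ∈ h` with `⁅a + A x, x⁆ = 0` in `g`;
(iii) `A x` lies in the projection `pr_v(g_x)` of the centralizer of `x` onto `v`,
     i.e. there is `ξ` with `⁅ξ, x⁆ = 0` and `ξ - A x ∈ h`. -/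
theorem stmt2 {g : Type*} [LieRing g] [LieAlgebra ℝ g] [FiniteDimensional ℝ g]
    (B : LinearMap.BilinForm ℝ g)
    (hsymm : ∀ x y : g, B x y = B y x)
    (hpos : ∀ x : g, x ≠ 0 → 0 < B x x)
    (hinv : ∀ a x y : g, B ⁅a, x⁆ y + B x ⁅a, y⁆ = 0)
    (h : LieSubalgebra ℝ g)
    (V : Submodule ℝ g) (hV : V = B.orthogonal h.toSubmodule)
    (A : V →ₗ[ℝ] V)
    (hAsymm : ∀ u w : V, B (A u : g) (w : g) = B (u : g) (A w : g))
    (hApos : ∀ u : V, u ≠ 0 → 0 < B (A u : g) (u : g))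
    (hAequiv : ∀ a ∈ h, ∀ u w : V, ⁅a, (u : g)⁆ = (w : g) → (A w : g) = ⁅a, (A u : g)⁆)
    (hAbr : ∀ u : V, ⁅(u : g), (A u : g)⁆ ∈ V)
    (x : V) :
    ((∃ a ∈ h, ⁅a + (A x : g), (x : g)⁆ ∈ h.toSubmodule) ↔
        (∃ a ∈ h, ⁅a + (A x : g), (x : g)⁆ = 0)) ∧
    ((∃ a ∈ h, ⁅a + (A x : g), (x : g)⁆ = 0) ↔
        (∃ ξ : g, ⁅ξ, (x : g)⁆ = 0 ∧ ξ - (A x : g) ∈ h.toSubmodule)) := by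
  -- membership in V means orthogonal to h
  have memV : ∀ z : g, z ∈ V ↔ ∀ n ∈ h, B n z = 0 := by
    intro z
    rw [hV]
    exact LinearMap.BilinForm.mem_orthogonal_iff
  -- h acts on V
  have hbrV : ∀ a ∈ h, ∀ u : g, u ∈ V → ⁅a, u⁆ ∈ V := by
    intro a ha u hu
    rw [memV] at hu ⊢
    intro n hn
    have := hinv a n u
    have h1 : B ⁅a, n⁆ u = 0 := hu _ (h.lie_mem ha hn)
    linarith
  -- V ∩ h = 0
  have hcap : ∀ z : g, z ∈ V → z ∈ h → z = 0 := by
    intro z hzV hzh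
    by_contra hz
    have := hpos z hz
    have h0 : B z z = 0 := (memV z).mp hzV z hzh
    linarith
  have hmain : ∀ a ∈ h, ⁅a + (A x : g), (x : g)⁆ ∈ V := by
    intro a ha
    have h1 : ⁅a, (x : g)⁆ ∈ V := hbrV a ha _ x.2
    have h2 : ⁅(A x : g), (x : g)⁆ ∈ V := by
      have := hAbr x
      have hneg : ⁅(A x : g), (x : g)⁆ = -⁅(x : g), (A x : g)⁆ := by
        rw [← lie_skew]
      rw [hneg]
      exact V.neg_mem this
    have : ⁅a + (A x : g), (x : g)⁆ = ⁅a, (x : g)⁆ + ⁅(A x : g), (x : g)⁆ := by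
      rw [add_lie]
    rw [this]
    exact V.add_mem h1 h2
  constructor
  · constructor
    · rintro ⟨a, ha, hab⟩
      exact ⟨a, ha, hcap _ (hmain a ha) hab⟩
    · rintro ⟨a, ha, hab⟩
      exact ⟨a, ha, hab ▸ h.toSubmodule.zero_mem⟩
  · constructor
    · rintro ⟨a, ha, hab⟩
      exact ⟨a + (A x : g), hab, by simpa using ha⟩
    · rintro ⟨ξ, hξ, hξh⟩
      refine ⟨ξ - (A x : g), hξh, ?_⟩
      simpa using hξ
end

section
/- Let g be a compact Lie algebra with Ad-invariant inner product ⟨·,·⟩, h ⊆ g a subalgebra, v = h^⊥, and x ∈ v. Define j_x = {η ∈ v : ⟨η, [x, h]⟩ = 0} and the skew form Λ_x(η₁, η₂) = −⟨x, [η₁, η₂]⟩ on j_x. Then the kernel of Λ_x on j_x equals pr_v(g_x), the orthogonal projection onto v of the centralizer g_x of x in g. -/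
/-!
Write `W = [x, h]`. Invariance makes `η ∈ j_x` the same as `η ⊥ W` and `η ∈ pr_v(g_x)` the
same as `[η, x] ∈ W`. Since `x ⊥ h`, also `h ⊥ W`, so `W^⊥ = h ⊕ (W^⊥ ∩ v) = h ⊕ j_x`. For
`η ∈ j_x` we have `[η, x] ⊥ h`, and `⟨[η, x], ζ⟩ = Λ_x(η, ζ)` for `ζ ∈ j_x`; hence `η` lies in the
kernel of `Λ_x` iff `[η, x] ⊥ W^⊥`, i.e. iff `[η, x] ∈ W^⊥⊥ = W`.
-/

namespace LinearMap.BilinForm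

section Invariant

variable {R L : Type*} [CommRing R] [LieRing L] [LieAlgebra R L] {B : LinearMap.BilinForm R L}

theorem apply_lie_eq_lie_apply (hB : B.lieInvariant L) (x y z : L) :
    B x ⁅y, z⁆ = B ⁅x, y⁆ z := by
  rw [← lie_skew x y, map_neg, LinearMap.neg_apply, hB, neg_neg]

theorem mem_orthogonal_map_ad_iff (hS : B.IsSymm) (N : Submodule R L) (x η : L) :
    η ∈ B.orthogonal (N.map (LieAlgebra.ad R L x)) ↔ ∀ a ∈ N, B η ⁅x, a⁆ = 0 := by
  simp only [mem_orthogonal_iff, Submodule.mem_map, forall_exists_index, and_imp,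
    forall_apply_eq_imp_iff₂, LieAlgebra.ad_apply, hS.eq _ η]

theorem le_orthogonal_map_ad (hS : B.IsSymm) (hB : B.lieInvariant L) (h : LieSubalgebra R L)
    {x : L} (hx : x ∈ B.orthogonal h.toSubmodule) :
    h.toSubmodule ≤ B.orthogonal (h.toSubmodule.map (LieAlgebra.ad R L x)) := by
  intro a ha
  rw [mem_orthogonal_map_ad_iff hS]
  intro b hb
  have hab : B ⁅a, b⁆ x = 0 := hx _ (h.lie_mem ha hb)
  rw [apply_lie_eq_lie_apply hB, ← lie_skew, map_neg, LinearMap.neg_apply,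
    ← apply_lie_eq_lie_apply hB, hS.eq, hab, neg_zero]

theorem apply_lie_eq_zero_of_lie_eq_zero (hS : B.IsSymm) (hB : B.lieInvariant L)
    {N : Submodule R L} {x ξ η ζ : L} (hξ : ⁅ξ, x⁆ = 0) (hξη : ξ - η ∈ N)
    (hζ : ∀ a ∈ N, B ζ ⁅x, a⁆ = 0) :
    B x ⁅η, ζ⁆ = 0 := by
  have hxη : ⁅x, η⁆ = -⁅x, ξ - η⁆ := by
    rw [lie_sub, ← lie_skew x ξ, hξ]
    abel
  rw [apply_lie_eq_lie_apply hB, hxη, map_neg, LinearMap.neg_apply, hS.eq, hζ _ hξη, neg_zero]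

end Invariant

variable {K L : Type*} [Field K] [LieRing L] [LieAlgebra K L] {B : LinearMap.BilinForm K L}

theorem nondegenerate_of_anisotropic (hR : B.IsRefl) (hA : ∀ x, B x x = 0 → x = 0) :
    B.Nondegenerate :=
  (LinearMap.IsRefl.nondegenerate_iff_separatingLeft hR).2 fun x hx => hA x (hx x)

theorem isCompl_orthogonal_of_anisotropic [FiniteDimensional K L] (hR : B.IsRefl)
    (hA : ∀ x, B x x = 0 → x = 0) (W : Submodule K L) : IsCompl W (B.orthogonal W) :=
  (isCompl_orthogonal_iff_disjoint hR).2 <|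
    Submodule.disjoint_def.2 fun x hxW hxW' => hA x (hxW' x hxW)

theorem orthogonal_map_ad_eq_sup [FiniteDimensional K L] (hS : B.IsSymm)
    (hA : ∀ x, B x x = 0 → x = 0) (hB : B.lieInvariant L) (h : LieSubalgebra K L)
    {x : L} (hx : x ∈ B.orthogonal h.toSubmodule) :
    B.orthogonal (h.toSubmodule.map (LieAlgebra.ad K L x)) =
      h.toSubmodule ⊔ B.orthogonal h.toSubmodule ⊓
        B.orthogonal (h.toSubmodule.map (LieAlgebra.ad K L x)) := by
  rw [← sup_inf_assoc_of_le _ (le_orthogonal_map_ad hS hB h hx),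
    (isCompl_orthogonal_of_anisotropic hS.isRefl hA _).sup_eq_top, top_inf_eq]

theorem lie_mem_map_ad_of_forall [FiniteDimensional K L] (hS : B.IsSymm)
    (hA : ∀ x, B x x = 0 → x = 0) (hB : B.lieInvariant L) (h : LieSubalgebra K L)
    {x η : L} (hx : x ∈ B.orthogonal h.toSubmodule) (hη : ∀ a ∈ h, B η ⁅x, a⁆ = 0)
    (hker : ∀ ζ ∈ B.orthogonal h.toSubmodule, (∀ a ∈ h, B ζ ⁅x, a⁆ = 0) → B x ⁅η, ζ⁆ = 0) :
    ⁅η, x⁆ ∈ h.toSubmodule.map (LieAlgebra.ad K L x) := by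
  rw [← orthogonal_orthogonal (nondegenerate_of_anisotropic hS.isRefl hA) hS.isRefl
    (h.toSubmodule.map (LieAlgebra.ad K L x))]
  intro z hz
  rw [orthogonal_map_ad_eq_sup hS hA hB h hx] at hz
  obtain ⟨a, ha, ζ, ⟨hζh, hζW⟩, rfl⟩ := Submodule.mem_sup.1 hz
  replace hζW := (mem_orthogonal_map_ad_iff hS _ _ _).1 hζW
  rw [hS.eq, map_add, ← apply_lie_eq_lie_apply hB, hη a ha, hB,
    hker ζ hζh hζW, neg_zero, zero_add]

end LinearMap.BilinForm

open LinearMap.BilinForm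

theorem stmt4_general {g : Type*} [LieRing g] [LieAlgebra ℝ g] [FiniteDimensional ℝ g]
    (B : LinearMap.BilinForm ℝ g)
    (hsymm : ∀ x y : g, B x y = B y x)
    (hpos : ∀ x : g, x ≠ 0 → 0 < B x x)
    (hinv : ∀ a x y : g, B ⁅a, x⁆ y + B x ⁅a, y⁆ = 0)
    (h : LieSubalgebra ℝ g)
    (V : Submodule ℝ g) (hV : V = B.orthogonal h.toSubmodule)
    (x : g) (hx : x ∈ V)
    (η : g) (hηj : ∀ a ∈ h, B η ⁅x, a⁆ = 0) :
    ((∀ η₂ ∈ V, (∀ a ∈ h, B η₂ ⁅x, a⁆ = 0) → -(B x ⁅η, η₂⁆) = 0) ↔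
      (∃ ξ : g, ⁅ξ, x⁆ = 0 ∧ ξ - η ∈ h.toSubmodule)) := by
  subst hV
  have hS : B.IsSymm := ⟨hsymm⟩
  have hA : ∀ x, B x x = 0 → x = 0 := fun x hxx => by_contra fun hx0 => (hpos x hx0).ne' hxx
  have hB : B.lieInvariant g := fun a x y => eq_neg_of_add_eq_zero_left (hinv a x y)
  simp only [neg_eq_zero]
  constructor
  · intro hker
    obtain ⟨a, ha, hxa⟩ := lie_mem_map_ad_of_forall hS hA hB h hx hηj hker
    refine ⟨η + a, ?_, by simpa using ha⟩
    rw [add_lie, ← hxa, LieAlgebra.ad_apply, ← lie_skew x a, neg_add_cancel]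
  · rintro ⟨ξ, hξ, hξη⟩ ζ - hζ
    exact apply_lie_eq_zero_of_lie_eq_zero hS hB hξ hξη hζ

/-- Compact Lie algebra `g` with `Ad`-invariant inner product `B`,
subalgebra `h`, `v = h^⊥`, `x ∈ v`.  Let
`j_x = {η ∈ v : B η ⁅x, a⁆ = 0 for all a ∈ h}` and let
`Λ_x(η₁, η₂) = − B x ⁅η₁, η₂⁆` be the induced skew form on `j_x`.  Then for
`η ∈ j_x`: `η` lies in the kernel of `Λ_x` (i.e. `Λ_x(η, ·) = 0` on `j_x`) iff
`η ∈ pr_v(g_x)`, i.e. iff there exists `ξ` with `⁅ξ, x⁆ = 0` and `ξ - η ∈ h`. -/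
theorem stmt4 {g : Type*} [LieRing g] [LieAlgebra ℝ g] [FiniteDimensional ℝ g]
    (B : LinearMap.BilinForm ℝ g)
    (hsymm : ∀ x y : g, B x y = B y x)
    (hpos : ∀ x : g, x ≠ 0 → 0 < B x x)
    (hinv : ∀ a x y : g, B ⁅a, x⁆ y + B x ⁅a, y⁆ = 0)
    (h : LieSubalgebra ℝ g)
    (V : Submodule ℝ g) (hV : V = B.orthogonal h.toSubmodule)
    (x : g) (hx : x ∈ V)
    (η : g) (hηV : η ∈ V) (hηj : ∀ a ∈ h, B η ⁅x, a⁆ = 0) :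
    ((∀ η₂ ∈ V, (∀ a ∈ h, B η₂ ⁅x, a⁆ = 0) → -(B x ⁅η, η₂⁆) = 0) ↔
      (∃ ξ : g, ⁅ξ, x⁆ = 0 ∧ ξ - η ∈ h.toSubmodule)) :=
  stmt4_general B hsymm hpos hinv h V hV x hx η hηj
end

section
/- Let g be a compact Lie algebra with Ad-invariant inner product, h a subalgebra, v = h^⊥, x ∈ v. The dimension of the kernel of the form Λ_x(η₁,η₂) = −⟨x,[η₁,η₂]⟩ restricted to j_x = {η ∈ v : ⟨η,[x,h]⟩=0} equals dim g_x − dim h_x. -/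
/-!
Write `A = [x, h]`, so that `j_x = (h + A)^⊥`. Since `x ⊥ h` and `h` is a subalgebra, `A ⊆ h^⊥`;
by invariance `ad x` is skew, whence `A^⊥ = (ad x)⁻¹(h^⊥)` and `Λ_x(η₂, η) = ⟨η₂, [x, η]⟩`.
So the kernel of `Λ_x` is `j_x ∩ (ad x)⁻¹(j_x^⊥) = j_x ∩ (ad x)⁻¹(h + A)`. For `η ∈ j_x` we have
`[x, η] ∈ h^⊥`, and `(h + A) ∩ h^⊥ = A` by the modular law, so the kernel is
`j_x ∩ (ad x)⁻¹(A) = j_x ∩ (h + g_x)`. It meets `h` trivially, and `g_x ⊆ A^⊥ = j_x + h`, so again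
by the modular law its sum with `h` is `h + g_x`. Counting dimensions,
`dim ker Λ_x + dim h = dim (h + g_x) = dim h + dim g_x - dim h_x`.
-/

open Module
open LinearMap (BilinForm ker)

namespace Submodule

variable {K V : Type*} [DivisionRing K] [AddCommGroup V] [Module K V] [FiniteDimensional K V]

theorem finrank_inf_sup_add_finrank_inf {J Q N : Submodule K V} (hJQ : Disjoint J Q)
    (hN : N ≤ J ⊔ Q) : finrank K ↥(J ⊓ (Q ⊔ N)) + finrank K ↥(Q ⊓ N) = finrank K N := by
  have hsup : J ⊓ (Q ⊔ N) ⊔ Q = Q ⊔ N := by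
    rw [inf_comm, inf_sup_assoc_of_le J le_sup_left, sup_comm J Q,
      inf_eq_left.mpr (sup_le le_sup_left (hN.trans_eq (sup_comm J Q)))]
  have hinf : J ⊓ (Q ⊔ N) ⊓ Q = ⊥ :=
    eq_bot_iff.mpr ((inf_le_inf_right Q inf_le_left).trans hJQ.le_bot)
  have hP := finrank_sup_add_finrank_inf_eq (J ⊓ (Q ⊔ N)) Q
  have hN' := finrank_sup_add_finrank_inf_eq Q N
  rw [hsup, hinf, finrank_bot] at hP
  omega

end Submodule

namespace LinearMap.BilinForm

section CommRing

variable {R M : Type*} [CommRing R] [AddCommGroup M] [Module R M] {B : BilinForm R M}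

theorem orthogonal_sup (N L : Submodule R M) :
    B.orthogonal (N ⊔ L) = B.orthogonal N ⊓ B.orthogonal L := by
  refine le_antisymm (le_inf (orthogonal_le le_sup_left) (orthogonal_le le_sup_right)) ?_
  rintro m ⟨hN, hL⟩ n hn
  obtain ⟨a, ha, b, hb, rfl⟩ := Submodule.mem_sup.mp hn
  change B (a + b) m = 0
  rw [map_add, LinearMap.add_apply, hN a ha, hL b hb, add_zero]

theorem inf_orthogonal_self_eq_bot (hB : B.toQuadraticMap.Anisotropic) (W : Submodule R M) :
    W ⊓ B.orthogonal W = ⊥ :=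
  eq_bot_iff.mpr fun w ⟨hw, hw'⟩ => hB w (hw' w hw)

theorem nondegenerate_of_anisotropic_s6 (hB : B.toQuadraticMap.Anisotropic) : B.Nondegenerate :=
  ⟨fun m hm => hB m (hm m), fun m hm => hB m (hm m)⟩

theorem sup_inf_orthogonal_eq (hB : B.toQuadraticMap.Anisotropic) {Q A : Submodule R M}
    (hA : A ≤ B.orthogonal Q) : (Q ⊔ A) ⊓ B.orthogonal Q = A := by
  rw [sup_comm, sup_inf_assoc_of_le Q hA, inf_orthogonal_self_eq_bot hB, sup_bot_eq]

variable {T : Module.End R M}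

theorem orthogonal_map_eq_comap_orthogonal (hT : B.IsSkewAdjoint T) (Q : Submodule R M) :
    B.orthogonal (Q.map T) = (B.orthogonal Q).comap T := by
  ext η
  simp only [Submodule.mem_comap, mem_orthogonal_iff, Submodule.mem_map, forall_exists_index,
    and_imp, forall_apply_eq_imp_iff₂]
  refine forall₂_congr fun ζ _ => ?_
  change B (T ζ) η = 0 ↔ B ζ (T η) = 0
  rw [hT ζ η, Pi.neg_apply, map_neg, neg_eq_zero]

theorem inf_comap_sup_map_eq_inf_sup_ker {Q : Submodule R M} (hB : B.toQuadraticMap.Anisotropic)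
    (hT : B.IsSkewAdjoint T) (hQ : Q.map T ≤ B.orthogonal Q) :
    B.orthogonal (Q ⊔ Q.map T) ⊓ (Q ⊔ Q.map T).comap T =
      B.orthogonal (Q ⊔ Q.map T) ⊓ (Q ⊔ ker T) := by
  set J := B.orthogonal (Q ⊔ Q.map T)
  have hJ : J ≤ (B.orthogonal Q).comap T := by
    rw [← orthogonal_map_eq_comap_orthogonal hT]
    exact orthogonal_le le_sup_right
  calc J ⊓ (Q ⊔ Q.map T).comap T
      = J ⊓ ((Q ⊔ Q.map T) ⊓ B.orthogonal Q).comap T := by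
        rw [Submodule.comap_inf, ← inf_assoc, inf_right_comm, inf_eq_left.mpr hJ]
    _ = J ⊓ (Q ⊔ ker T) := by
        rw [sup_inf_orthogonal_eq hB hQ, Submodule.comap_map_eq]

end CommRing

section Field

variable {K E : Type*} [Field K] [AddCommGroup E] [Module K E] [FiniteDimensional K E]
  {B : BilinForm K E} {Q : Submodule K E}

theorem orthogonal_sup_sup_eq_orthogonal (hB₀ : B.IsRefl) (hB : B.toQuadraticMap.Anisotropic)
    {A : Submodule K E} (hA : A ≤ B.orthogonal Q) :
    B.orthogonal (Q ⊔ A) ⊔ Q = B.orthogonal A := by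
  have hnd := nondegenerate_of_anisotropic_s6 hB
  rw [← orthogonal_orthogonal hnd hB₀ (B.orthogonal (Q ⊔ A) ⊔ Q), orthogonal_sup,
    orthogonal_orthogonal hnd hB₀, sup_inf_orthogonal_eq hB hA]

variable {T : Module.End K E}

theorem finrank_inf_comap_sup_map_add_finrank_inf_ker (hB₀ : B.IsRefl)
    (hB : B.toQuadraticMap.Anisotropic) (hT : B.IsSkewAdjoint T) (hQ : Q.map T ≤ B.orthogonal Q) :
    finrank K ↥(B.orthogonal (Q ⊔ Q.map T) ⊓ (Q ⊔ Q.map T).comap T) + finrank K ↥(Q ⊓ ker T) =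
      finrank K ↥(ker T) := by
  have hdisj : Disjoint (B.orthogonal (Q ⊔ Q.map T)) Q :=
    (disjoint_iff.mpr (inf_orthogonal_self_eq_bot hB Q)).symm.mono_left
      (orthogonal_le le_sup_left)
  have hker : ker T ≤ B.orthogonal (Q ⊔ Q.map T) ⊔ Q := by
    rw [orthogonal_sup_sup_eq_orthogonal hB₀ hB hQ, orthogonal_map_eq_comap_orthogonal hT]
    exact LinearMap.ker_le_comap T
  rw [inf_comap_sup_map_eq_inf_sup_ker hB hT hQ]
  exact Submodule.finrank_inf_sup_add_finrank_inf hdisj hker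

end Field

end LinearMap.BilinForm

section LieAlgebra

open LieAlgebra

variable {R L : Type*} [CommRing R] [LieRing L] [LieAlgebra R L] {B : BilinForm R L}

theorem LinearMap.BilinForm.lieInvariant.apply_lie (hB : B.lieInvariant L) (a b c : L) :
    B a ⁅b, c⁆ = B ⁅a, b⁆ c := by
  rw [← lie_skew a b, map_neg, LinearMap.neg_apply, hB, neg_neg]

theorem LinearMap.BilinForm.lieInvariant.isSkewAdjoint_ad (hB : B.lieInvariant L) (x : L) :
    B.IsSkewAdjoint (ad R L x) := fun a b => by
  change B ⁅x, a⁆ b = B a (-⁅x, b⁆)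
  rw [map_neg, hB]

theorem LieSubalgebra.map_ad_le_orthogonal (hB₀ : B.IsRefl) (hB : B.lieInvariant L)
    (H : LieSubalgebra R L) {x : L} (hx : x ∈ B.orthogonal H.toSubmodule) :
    H.toSubmodule.map (ad R L x) ≤ B.orthogonal H.toSubmodule := by
  rintro _ ⟨ζ, hζ, rfl⟩ n hn
  change B n ⁅x, ζ⁆ = 0
  rw [hB.apply_lie, hB, hB₀ _ _ (hx _ (H.lie_mem hn hζ)), neg_zero]

theorem LinearMap.BilinForm.iInf_ker_comp_ad_eq_comap_orthogonal (hB : B.lieInvariant L) (x : L)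
    (J : Submodule R L) :
    ⨅ η ∈ J, ker ((B x).comp (ad R L η)) = (B.orthogonal J).comap (ad R L x) := by
  ext y
  simp only [Submodule.mem_iInf, LinearMap.mem_ker, LinearMap.comp_apply, ad_apply,
    Submodule.mem_comap, mem_orthogonal_iff]
  refine forall₂_congr fun η _ => ?_
  change B x ⁅η, y⁆ = 0 ↔ B η ⁅x, y⁆ = 0
  rw [hB.apply_lie, hB, neg_eq_zero]

end LieAlgebra

/-- Compact Lie algebra `g` with `Ad`-invariant inner product `B`,
subalgebra `h`, `v = h^⊥`, `x ∈ v`.  Let `j_x` be the orthogonal complement in `v`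
of `[x, h]`, and let `K_x` be the kernel of the skew form
`Λ_x(η₁,η₂) = −B x ⁅η₁,η₂⁆` on `j_x`, i.e.
`K_x = {η ∈ j_x : B x ⁅η₂, η⁆ = 0 for all η₂ ∈ j_x}`.  Then
`dim K_x = dim g_x − dim h_x`, where `g_x = ker (ad x)` is the centralizer of `x`
and `h_x = h ∩ g_x` (stated additively: `dim K_x + dim h_x = dim g_x`). -/
theorem stmt6 {g : Type*} [LieRing g] [LieAlgebra ℝ g] [FiniteDimensional ℝ g]
    (B : LinearMap.BilinForm ℝ g)
    (hsymm : ∀ x y : g, B x y = B y x)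
    (hpos : ∀ x : g, x ≠ 0 → 0 < B x x)
    (hinv : ∀ a x y : g, B ⁅a, x⁆ y + B x ⁅a, y⁆ = 0)
    (h : LieSubalgebra ℝ g)
    (V : Submodule ℝ g) (hV : V = B.orthogonal h.toSubmodule)
    (x : g) (hx : x ∈ V)
    (Jx : Submodule ℝ g)
    (hJx : Jx = V ⊓ B.orthogonal (Submodule.map (LieAlgebra.ad ℝ g x) h.toSubmodule))
    (Kx : Submodule ℝ g)
    (hKx : Kx = Jx ⊓ (⨅ η₂ ∈ Jx, LinearMap.ker ((B x).comp (LieAlgebra.ad ℝ g η₂))))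
    (gx hx_sub : Submodule ℝ g)
    (hgx : gx = LinearMap.ker (LieAlgebra.ad ℝ g x))
    (hhx : hx_sub = h.toSubmodule ⊓ LinearMap.ker (LieAlgebra.ad ℝ g x)) :
    Module.finrank ℝ Kx + Module.finrank ℝ hx_sub = Module.finrank ℝ gx := by
  subst hV hJx hKx hgx hhx
  have hB₀ : B.IsRefl := fun a b hab => by rwa [hsymm]
  have hB : B.toQuadraticMap.Anisotropic := QuadraticMap.PosDef.anisotropic hpos
  have hBinv : B.lieInvariant g := fun a y z => eq_neg_of_add_eq_zero_left (hinv a y z)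
  rw [← LinearMap.BilinForm.orthogonal_sup, B.iInf_ker_comp_ad_eq_comap_orthogonal hBinv,
    LinearMap.BilinForm.orthogonal_orthogonal (B.nondegenerate_of_anisotropic_s6 hB) hB₀]
  exact B.finrank_inf_comap_sup_map_add_finrank_inf_ker hB₀ hB (hBinv.isSkewAdjoint_ad x)
    (h.map_ad_le_orthogonal hB₀ hBinv hx)
end

section
/- Let g be a compact semisimple Lie algebra with the negative Killing form inner product, h ⊆ k ⊆ g subalgebras, g = h ⊕ l ⊕ m and k = h ⊕ l the orthogonal decompositions, with [l,h] = 0 and [l,l] ⊆ l. For x = x_l + x_m ∈ v = l ⊕ m, write δ(x) = ½⟨x_l, x_l⟩ and h₀(x) = ½⟨x,x⟩. Then the Poisson bracket {δ, f}_v(x) = −⟨x, [∇δ(x), ∇f(x)]⟩ vanishes for every Ad_K-invariant polynomial f on m (extended to v via the projection v → m), i.e. ⟨x, [x_l, ∇f(x_m)]⟩ = 0 for all x ∈ v. -/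
/-- Compact semisimple `g` with inner product `B = −Killing`,
subalgebras `h ⊆ k ⊆ g`, orthogonal decompositions `g = h ⊕ l ⊕ m`, `k = h ⊕ l`
(`l = k ∩ h^⊥`, `m = k^⊥`), with `⁅l, h⁆ = 0` and `⁅l, l⁆ ⊆ l`.  Let `f` be an
`Ad_K`-invariant polynomial on `m`, encoded by its gradient `∇f : m → m`, which
satisfies the infinitesimal invariance `B ⁅c, y⁆ (∇f y) = 0` for all `c ∈ k`,
`y ∈ m`.  Then the Lie–Poisson bracket
`{δ, f}_v(x) = −B x ⁅∇δ(x), ∇f(x)⁆ = −B x ⁅x_l, ∇f(x_m)⁆` vanishes identically: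
`B (x_l + x_m) ⁅x_l, ∇f x_m⁆ = 0` for all `x = x_l + x_m ∈ v = l ⊕ m`. -/
theorem stmt8 {g : Type*} [LieRing g] [LieAlgebra ℝ g] [FiniteDimensional ℝ g]
    [LieAlgebra.IsSemisimple ℝ g]
    (B : LinearMap.BilinForm ℝ g)
    (hkill : ∀ x y : g, B x y = -(killingForm ℝ g x y))
    (hpos : ∀ x : g, x ≠ 0 → 0 < B x x)
    (h k : LieSubalgebra ℝ g) (hhk : h ≤ k)
    (l m : Submodule ℝ g)
    (hl : l = k.toSubmodule ⊓ B.orthogonal h.toSubmodule)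
    (hm : m = B.orthogonal k.toSubmodule)
    (hlh : ∀ c ∈ l, ∀ b ∈ h, ⁅c, b⁆ = 0)
    (hll : ∀ c ∈ l, ∀ c' ∈ l, ⁅c, c'⁆ ∈ l)
    (gradf : m → m)
    (hgrad : ∀ y : m, ∀ c ∈ k, B ⁅c, (y : g)⁆ (gradf y : g) = 0) :
    ∀ xl ∈ l, ∀ xm : m, B (xl + (xm : g)) ⁅xl, (gradf xm : g)⁆ = 0 := by
  intro xl hxl xm
  have hxk : xl ∈ k := by
    rw [hl] at hxl
    exact hxl.1
  have h1 : killingForm ℝ g xl ⁅xl, (gradf xm : g)⁆ = 0 := by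
    rw [← LieModule.traceForm_apply_lie_apply, lie_self]
    simp
  have h2 : killingForm ℝ g (xm : g) ⁅xl, (gradf xm : g)⁆ = 0 := by
    rw [← LieModule.traceForm_apply_lie_apply]
    have := hgrad xm xl hxk
    rw [hkill] at this
    have h3 : killingForm ℝ g ⁅xl, (xm : g)⁆ (gradf xm : g) = 0 := by linarith
    have : ⁅(xm : g), xl⁆ = -⁅xl, (xm : g)⁆ := by rw [← lie_skew]
    rw [this, map_neg, LinearMap.neg_apply, h3, neg_zero]
  rw [hkill, map_add, LinearMap.add_apply, h1, h2]
  simp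
end

section
/- Let g be a compact Lie algebra with Ad-invariant inner product, h a subalgebra, v = h^⊥, and suppose the G-invariant metric determined by positive definite Ad_H-equivariant I : v → v is a g.o. metric, i.e. for every X ∈ v there exists F ∈ h with ([X+F, Y]_v, IX) = 0 for all Y ∈ v, where (·,·) = ⟨I·,·⟩. If this holds for the operator I, then it also holds when I is replaced by I restricted-rescaled along invariant summands in the following special case: if g = h ⊕ l ⊕ m with k = h ⊕ l a subalgebra and I_λ = λ·Id_l ⊕ Id_m defines a g.o. metric for one value λ ≠ 1, λ > 0, then I_λ defines a g.o. metric for every λ > 0. -/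
/-!
Write `v = l ⊕ m`, `X = x_l + x_m` and `I_λ X = λ x_l + x_m`. By invariance of `B`,
`λ B z_l X + B z_m X = B ⁅X + F, Y⁆ (I_λ X) = -B Y ⁅X + F, I_λ X⁆`, and `⁅X + F, I_λ X⁆ ∈ v`,
so `F ∈ h` is a witness for `X` exactly when `⁅X + F, I_λ X⁆ = 0`. Splitting this vector into
its `l`- and `m`-components, the condition reads `⁅F, x_l⁆ = 0` and
`⁅F, x_m⁆ = (λ - 1) ⁅x_l, x_m⁆`, which is linear in `λ - 1`: rescaling a witness for `λ₀ ≠ 1`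
by `(λ - 1) / (λ₀ - 1)` gives a witness for `λ`.
-/

theorem Submodule.add_eq_zero_iff_of_disjoint {R M : Type*} [Ring R] [AddCommGroup M]
    [Module R M] {p q : Submodule R M} (hpq : Disjoint p q) {x y : M} (hx : x ∈ p) (hy : y ∈ q) :
    x + y = 0 ↔ x = 0 ∧ y = 0 := by
  refine ⟨fun hxy ↦ ?_, fun ⟨hx0, hy0⟩ ↦ by rw [hx0, hy0, add_zero]⟩
  have hy0 : y = 0 :=
    Submodule.disjoint_def.1 hpq y (eq_neg_of_add_eq_zero_right hxy ▸ neg_mem hx) hy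
  exact ⟨by simpa [hy0] using hxy, hy0⟩

namespace LinearMap.BilinForm

variable {K L : Type*} [Field K] [LieRing L] [LieAlgebra K L] {B : LinearMap.BilinForm K L}

theorem lie_mem_orthogonal (hBi : B.lieInvariant L) {s : LieSubalgebra K L} {a x : L}
    (ha : a ∈ s) (hx : x ∈ B.orthogonal s.toSubmodule) : ⁅a, x⁆ ∈ B.orthogonal s.toSubmodule := by
  rw [mem_orthogonal_iff]
  intro n hn
  rw [← neg_eq_zero, ← hBi]
  exact hx _ (s.lie_mem ha hn)

theorem disjoint_orthogonal_of_anisotropic (hBa : B.toQuadraticMap.Anisotropic)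
    (W : Submodule K L) : Disjoint W (B.orthogonal W) :=
  Submodule.disjoint_def.2 fun x hxW hx ↦ hBa x (hx x hxW)

theorem isCompl_orthogonal_of_anisotropic_s13 [FiniteDimensional K L] (hBs : B.IsSymm)
    (hBa : B.toQuadraticMap.Anisotropic) (W : Submodule K L) : IsCompl W (B.orthogonal W) :=
  (isCompl_orthogonal_iff_disjoint hBs.isRefl).2 (disjoint_orthogonal_of_anisotropic hBa W)

end LinearMap.BilinForm

/-- `F ∈ h` satisfies the Geodesic Lemma for `X` and `ds²_λ`: `(⁅X + F, Y⁆_v, X)_λ = 0` on `v`. -/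
def IsGOWitness {K L : Type*} [Field K] [LieRing L] [LieAlgebra K L]
    (B : LinearMap.BilinForm K L) (h k : LieSubalgebra K L) (lam : K) (X F : L) : Prop :=
  ∀ Y ∈ B.orthogonal h.toSubmodule, ∀ zh ∈ h.toSubmodule,
    ∀ zl ∈ k.toSubmodule ⊓ B.orthogonal h.toSubmodule, ∀ zm ∈ B.orthogonal k.toSubmodule,
      ⁅X + F, Y⁆ = zh + zl + zm → lam * B zl X + B zm X = 0

section GOCondition

variable {K L : Type*} [Field K] [LieRing L] [LieAlgebra K L] {B : LinearMap.BilinForm K L}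
  {h k : LieSubalgebra K L}

local notation "𝔳" => B.orthogonal h.toSubmodule
local notation "𝔩" => k.toSubmodule ⊓ B.orthogonal h.toSubmodule
local notation "𝔪" => B.orthogonal k.toSubmodule

theorem exists_mem_add_mem_of_mem_orthogonal [FiniteDimensional K L] (hBs : B.IsSymm)
    (hBa : B.toQuadraticMap.Anisotropic) (hhk : h ≤ k) {X : L} (hX : X ∈ 𝔳) :
    ∃ xl ∈ 𝔩, ∃ xm ∈ 𝔪, X = xl + xm := by
  obtain ⟨xk, hxk, xm, hxm, rfl⟩ := Submodule.mem_sup.1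
    ((B.isCompl_orthogonal_of_anisotropic_s13 hBs hBa k.toSubmodule).sup_eq_top ▸
      Submodule.mem_top (x := X))
  have hxkV : xk ∈ 𝔳 := by
    simpa using sub_mem hX (B.orthogonal_le hhk hxm)
  exact ⟨xk, ⟨hxk, hxkV⟩, xm, hxm, rfl⟩

theorem exists_mem_add_mem_add_mem [FiniteDimensional K L] (hBs : B.IsSymm)
    (hBa : B.toQuadraticMap.Anisotropic) (hhk : h ≤ k) (z : L) :
    ∃ zh ∈ h.toSubmodule, ∃ zl ∈ 𝔩, ∃ zm ∈ 𝔪, z = zh + zl + zm := by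
  obtain ⟨zh, hzh, zv, hzv, rfl⟩ := Submodule.mem_sup.1
    ((B.isCompl_orthogonal_of_anisotropic_s13 hBs hBa h.toSubmodule).sup_eq_top ▸
      Submodule.mem_top (x := z))
  obtain ⟨zl, hzl, zm, hzm, rfl⟩ := exists_mem_add_mem_of_mem_orthogonal hBs hBa hhk hzv
  exact ⟨zh, hzh, zl, hzl, zm, hzm, (add_assoc _ _ _).symm⟩

theorem mul_apply_add_apply_eq_apply_smul_add (hBs : B.IsSymm) (hhk : h ≤ k) (lam : K)
    {zh zl zm xl xm : L} (hzh : zh ∈ h.toSubmodule) (hzl : zl ∈ 𝔩) (hzm : zm ∈ 𝔪)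
    (hxl : xl ∈ 𝔩) (hxm : xm ∈ 𝔪) :
    lam * B zl (xl + xm) + B zm (xl + xm) = B (zh + zl + zm) (lam • xl + xm) := by
  have hhl : B zh xl = 0 := hxl.2 zh hzh
  have hhm : B zh xm = 0 := hxm zh (hhk hzh)
  have hlm : B zl xm = 0 := hxm zl hzl.1
  have hml : B zm xl = 0 := by rw [hBs.eq]; exact hzm xl hxl.1
  simp only [map_add, map_smul, LinearMap.add_apply, smul_eq_mul, hhl, hhm, hlm, hml]
  ring

theorem lie_add_add_smul_add (F xl xm : L) (lam : K) :
    ⁅xl + xm + F, lam • xl + xm⁆ = lam • ⁅F, xl⁆ + (⁅F, xm⁆ - (lam - 1) • ⁅xl, xm⁆) := by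
  simp only [add_lie, lie_add, lie_smul, lie_self, ← lie_skew xm xl]
  module

theorem lie_add_add_smul_add_mem (hBi : B.lieInvariant L) (hhk : h ≤ k) (lam : K) {F xl xm : L}
    (hF : F ∈ h) (hxl : xl ∈ 𝔩) (hxm : xm ∈ 𝔪) :
    lam • ⁅F, xl⁆ ∈ 𝔩 ∧ ⁅F, xm⁆ - (lam - 1) • ⁅xl, xm⁆ ∈ 𝔪 :=
  ⟨Submodule.smul_mem _ lam
      ⟨k.lie_mem (hhk hF) hxl.1, B.lie_mem_orthogonal hBi hF hxl.2⟩,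
    sub_mem (B.lie_mem_orthogonal hBi (hhk hF) hxm)
      (Submodule.smul_mem _ _ (B.lie_mem_orthogonal hBi hxl.1 hxm))⟩

theorem lie_add_add_smul_add_eq_zero_iff (hBi : B.lieInvariant L)
    (hBa : B.toQuadraticMap.Anisotropic) (hhk : h ≤ k) {lam : K} (hlam : lam ≠ 0) {F xl xm : L}
    (hF : F ∈ h) (hxl : xl ∈ 𝔩) (hxm : xm ∈ 𝔪) :
    ⁅xl + xm + F, lam • xl + xm⁆ = 0 ↔ ⁅F, xl⁆ = 0 ∧ ⁅F, xm⁆ = (lam - 1) • ⁅xl, xm⁆ := by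
  obtain ⟨hl, hm⟩ := lie_add_add_smul_add_mem hBi hhk lam hF hxl hxm
  have hlm : Disjoint 𝔩 𝔪 :=
    (B.disjoint_orthogonal_of_anisotropic hBa k.toSubmodule).mono_left inf_le_left
  rw [lie_add_add_smul_add, Submodule.add_eq_zero_iff_of_disjoint hlm hl hm, smul_eq_zero,
    sub_eq_zero]
  simp only [hlam, false_or]

theorem isGOWitness_iff_lie_eq_zero [FiniteDimensional K L] (hBs : B.IsSymm)
    (hBi : B.lieInvariant L) (hBa : B.toQuadraticMap.Anisotropic) (hhk : h ≤ k) (lam : K)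
    {F xl xm : L} (hF : F ∈ h) (hxl : xl ∈ 𝔩) (hxm : xm ∈ 𝔪) :
    IsGOWitness B h k lam (xl + xm) F ↔ ⁅xl + xm + F, lam • xl + xm⁆ = 0 := by
  set w := ⁅xl + xm + F, lam • xl + xm⁆ with hw_def
  have hpairing : ∀ Y zh zl zm : L, zh ∈ h.toSubmodule → zl ∈ 𝔩 → zm ∈ 𝔪 →
      ⁅xl + xm + F, Y⁆ = zh + zl + zm → lam * B zl (xl + xm) + B zm (xl + xm) = -B Y w := by
    intro Y zh zl zm hzh hzl hzm hz
    rw [mul_apply_add_apply_eq_apply_smul_add hBs hhk lam hzh hzl hzm hxl hxm, ← hz, hBi]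
  have hw : w ∈ 𝔳 := by
    obtain ⟨hl, hm⟩ := lie_add_add_smul_add_mem hBi hhk lam hF hxl hxm
    rw [hw_def, lie_add_add_smul_add]
    exact add_mem hl.2 (B.orthogonal_le hhk hm)
  constructor
  · intro hGO
    obtain ⟨zh, hzh, zl, hzl, zm, hzm, hz⟩ :=
      exists_mem_add_mem_add_mem hBs hBa hhk ⁅xl + xm + F, w⁆
    have hww := hGO w hw zh hzh zl hzl zm hzm hz
    rw [hpairing w zh zl zm hzh hzl hzm hz, neg_eq_zero] at hww
    exact hBa w hww
  · intro hw0 Y _ zh hzh zl hzl zm hzm hz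
    rw [hpairing Y zh zl zm hzh hzl hzm hz, hw0, map_zero, neg_zero]

theorem IsGOWitness.smul_of_ne_one [FiniteDimensional K L] (hBs : B.IsSymm)
    (hBi : B.lieInvariant L) (hBa : B.toQuadraticMap.Anisotropic) (hhk : h ≤ k) {lam0 lam : K}
    (hlam0 : lam0 ≠ 0) (hlam0ne : lam0 ≠ 1) (hlam : lam ≠ 0) {F xl xm : L} (hF : F ∈ h)
    (hxl : xl ∈ 𝔩) (hxm : xm ∈ 𝔪) (hGO : IsGOWitness B h k lam0 (xl + xm) F) :
    IsGOWitness B h k lam (xl + xm) (((lam - 1) / (lam0 - 1)) • F) := by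
  have htF : ((lam - 1) / (lam0 - 1)) • F ∈ h := h.smul_mem _ hF
  rw [isGOWitness_iff_lie_eq_zero hBs hBi hBa hhk lam0 hF hxl hxm,
    lie_add_add_smul_add_eq_zero_iff hBi hBa hhk hlam0 hF hxl hxm] at hGO
  rw [isGOWitness_iff_lie_eq_zero hBs hBi hBa hhk lam htF hxl hxm,
    lie_add_add_smul_add_eq_zero_iff hBi hBa hhk hlam htF hxl hxm, smul_lie, smul_lie, hGO.1,
    hGO.2, smul_zero, smul_smul, div_mul_cancel₀ _ (sub_ne_zero.2 hlam0ne)]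
  exact ⟨rfl, rfl⟩

end GOCondition

theorem stmt13_general {g : Type*} [LieRing g] [LieAlgebra ℝ g] [FiniteDimensional ℝ g]
    (B : LinearMap.BilinForm ℝ g)
    (hkill : ∀ x y : g, B x y = -(killingForm ℝ g x y))
    (hpos : ∀ x : g, x ≠ 0 → 0 < B x x)
    (h k : LieSubalgebra ℝ g) (hhk : h ≤ k)
    (l m V : Submodule ℝ g)
    (hl : l = k.toSubmodule ⊓ B.orthogonal h.toSubmodule)
    (hm : m = B.orthogonal k.toSubmodule)
    (hV : V = B.orthogonal h.toSubmodule)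
    (lam0 : ℝ) (hlam0 : 0 < lam0) (hlam0ne : lam0 ≠ 1)
    (hGO0 : ∀ X ∈ V, ∃ F ∈ h, ∀ Y ∈ V,
      ∀ zh ∈ h.toSubmodule, ∀ zl ∈ l, ∀ zm ∈ m,
        ⁅X + F, Y⁆ = zh + zl + zm → lam0 * B zl X + B zm X = 0) :
    ∀ lam : ℝ, 0 < lam →
      ∀ X ∈ V, ∃ F ∈ h, ∀ Y ∈ V,
        ∀ zh ∈ h.toSubmodule, ∀ zl ∈ l, ∀ zm ∈ m,
          ⁅X + F, Y⁆ = zh + zl + zm → lam * B zl X + B zm X = 0 := by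
  have hBs : B.IsSymm := ⟨fun x y ↦ by rw [hkill, hkill, LieModule.traceForm_comm]⟩
  have hBi : B.lieInvariant g := fun x y z ↦ by
    rw [hkill, hkill, LieModule.traceForm_apply_lie_apply', neg_neg]
  have hBa : B.toQuadraticMap.Anisotropic := QuadraticMap.PosDef.anisotropic hpos
  subst hl hm hV
  intro lam hlam X hX
  obtain ⟨xl, hxl, xm, hxm, rfl⟩ := exists_mem_add_mem_of_mem_orthogonal hBs hBa hhk hX
  obtain ⟨F, hF, hGO⟩ := hGO0 _ hX
  exact ⟨_, h.smul_mem _ hF,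
    IsGOWitness.smul_of_ne_one hBs hBi hBa hhk hlam0.ne' hlam0ne hlam.ne' hF hxl hxm hGO⟩

/-- Compact semisimple `g`, `B = −Killing`, chain of subalgebras
`h ⊆ k ⊆ g`, orthogonal decompositions `g = h ⊕ l ⊕ m`, `k = h ⊕ l`,
`v = l ⊕ m = h^⊥`.  The metric `ds²_λ` is given on `v` by
`(x, y)_λ = λ B x_l y_l + B x_m y_m`.  By the Geodesic Lemma, `ds²_λ` is a g.o.
metric iff for every `X ∈ v` there is `F ∈ h` such that for all `Y ∈ v`, writing
`⁅X + F, Y⁆ = z_h + z_l + z_m` (`z_h ∈ h`, `z_l ∈ l`, `z_m ∈ m`), one has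
`λ B z_l X + B z_m X = 0` (this is `(⁅X+F, Y⁆_v, X)_λ = 0`).
**Claim:** if `ds²_λ₀` is a g.o. metric for a single `λ₀ > 0`, `λ₀ ≠ 1`, then
`ds²_λ` is a g.o. metric for every `λ > 0`. -/
theorem stmt13 {g : Type*} [LieRing g] [LieAlgebra ℝ g] [FiniteDimensional ℝ g]
    [LieAlgebra.IsSemisimple ℝ g]
    (B : LinearMap.BilinForm ℝ g)
    (hkill : ∀ x y : g, B x y = -(killingForm ℝ g x y))
    (hpos : ∀ x : g, x ≠ 0 → 0 < B x x)
    (h k : LieSubalgebra ℝ g) (hhk : h ≤ k)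
    (l m V : Submodule ℝ g)
    (hl : l = k.toSubmodule ⊓ B.orthogonal h.toSubmodule)
    (hm : m = B.orthogonal k.toSubmodule)
    (hV : V = B.orthogonal h.toSubmodule)
    (lam0 : ℝ) (hlam0 : 0 < lam0) (hlam0ne : lam0 ≠ 1)
    (hGO0 : ∀ X ∈ V, ∃ F ∈ h, ∀ Y ∈ V,
      ∀ zh ∈ h.toSubmodule, ∀ zl ∈ l, ∀ zm ∈ m,
        ⁅X + F, Y⁆ = zh + zl + zm → lam0 * B zl X + B zm X = 0) :
    ∀ lam : ℝ, 0 < lam →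
      ∀ X ∈ V, ∃ F ∈ h, ∀ Y ∈ V,
        ∀ zh ∈ h.toSubmodule, ∀ zl ∈ l, ∀ zm ∈ m,
          ⁅X + F, Y⁆ = zh + zl + zm → lam * B zl X + B zm X = 0 :=
  stmt13_general B hkill hpos h k hhk l m V hl hm hV lam0 hlam0 hlam0ne hGO0
end

section
/- Let g be a compact Lie algebra with Ad-invariant inner product, h a subalgebra, v = h^⊥. Every restriction p = f|_v of an Ad_G-invariant polynomial f on g to v is a central (Casimir) element of the Poisson algebra (ℝ[v]^H, {·,·}_v): for every Ad_H-invariant polynomial q on v, {p, q}_v(x) = −⟨x, [∇p(x), ∇q(x)]⟩ = 0 for all x ∈ v. In particular h₀(x) = ½⟨x,x⟩ is central. -/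
/-- Compact Lie algebra `g` with `Ad`-invariant inner product
`B`, subalgebra `h`, `v = h^⊥`.  Let `f` be an `Ad_G`-invariant polynomial on
`g`, encoded by its gradient `∇f : g → g`, which satisfies `⁅∇f x, x⁆ = 0` for
all `x`.  Its restriction `p = f|_v` has gradient `∇p(x) = pr_v (∇f x)` at
`x ∈ v`.  Let `q` be any `Ad_H`-invariant polynomial on `v`, encoded by its
gradient `∇q : v → v` satisfying the infinitesimal invariance
`B ⁅a, x⁆ (∇q x) = 0` for all `a ∈ h`, `x ∈ v`.  Then `p` is a central (Casimir)
function of the Poisson algebra `(ℝ[v]^H, {·,·}_v)`: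
`{p, q}_v(x) = −B x ⁅pr_v (∇f x), ∇q x⁆ = 0` for all `x ∈ v`, where the
decomposition `∇f x = a + w`, `a ∈ h`, `w ∈ v`, expresses the projection.
(In particular, `h₀(x) = ½ B x x`, with `∇f x = x`, is central.) -/
theorem stmt17 {g : Type*} [LieRing g] [LieAlgebra ℝ g] [FiniteDimensional ℝ g]
    (B : LinearMap.BilinForm ℝ g)
    (hsymm : ∀ x y : g, B x y = B y x)
    (hpos : ∀ x : g, x ≠ 0 → 0 < B x x)
    (hinv : ∀ a x y : g, B ⁅a, x⁆ y + B x ⁅a, y⁆ = 0)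
    (h : LieSubalgebra ℝ g)
    (V : Submodule ℝ g) (hV : V = B.orthogonal h.toSubmodule)
    (gradf : g → g) (hgradf : ∀ x : g, ⁅gradf x, x⁆ = 0)
    (gradq : V → V)
    (hgradq : ∀ x : V, ∀ a ∈ h, B ⁅a, (x : g)⁆ (gradq x : g) = 0) :
    ∀ x : V, ∀ a ∈ h, ∀ w ∈ V, gradf (x : g) = a + w →
      -(B (x : g) ⁅w, (gradq x : g)⁆) = 0 := by
  intro x a ha w hw hdec
  have h0 : ⁅a, (x : g)⁆ + ⁅w, (x : g)⁆ = 0 := by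
    have := hgradf (x : g)
    rw [hdec, add_lie] at this
    exact this
  have hwx : ⁅w, (x : g)⁆ = -⁅a, (x : g)⁆ := eq_neg_of_add_eq_zero_right h0
  have key : B (x : g) ⁅w, (gradq x : g)⁆ = - B ⁅w, (x : g)⁆ (gradq x : g) := by
    have := hinv w (x : g) (gradq x : g)
    linarith
  rw [key, hwx, map_neg, LinearMap.neg_apply, hgradq x a ha, neg_zero]
  simp
end
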